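/- Let 0 < T₁ < T₂ with T₂ ≥ 1, and let H : ℝ → ℝ be differentiable on [T₁,T₂] with 0 < H(t) < 1 and H'(t) ≥ 0 for all t ∈ [T₁,T₂]. Then the function σ_H(t) = t^{H(t)} attains its maximum over [T₁,T₂] uniquely at T₂: for every t ∈ [T₁,T₂), σ_H(t) < σ_H(T₂). In particular σ_H(t) = t^{H(t)} < 1 for all t ∈ [T₁,T₂] with t < 1, and σ_H'(t) = t^{H(t)}·(H'(t)·ln t + H(t)/t) > 0 for all t ∈ [T₁,T₂] with t ≥ 1. -/
import Mathlib


open Real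

theorem sigma_max_at_right_increasing_H
    (T₁ T₂ : ℝ) (hT₁ : 0 < T₁) (hT₁₂ : T₁ < T₂) (hT₂ : 1 ≤ T₂)
    (H H' : ℝ → ℝ)
    (hderiv : ∀ t ∈ Set.Icc T₁ T₂, HasDerivAt H (H' t) t)
    (hHpos : ∀ t ∈ Set.Icc T₁ T₂, 0 < H t)
    (hHlt1 : ∀ t ∈ Set.Icc T₁ T₂, H t < 1)
    (hH'ge : ∀ t ∈ Set.Icc T₁ T₂, 0 ≤ H' t) :
    (∀ t ∈ Set.Ico T₁ T₂, t ^ H t < T₂ ^ H T₂) ∧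
    (∀ t ∈ Set.Icc T₁ T₂, t < 1 → t ^ H t < 1) ∧
    (∀ t ∈ Set.Icc T₁ T₂, 1 ≤ t →
      HasDerivAt (fun s : ℝ => s ^ H s)
        (t ^ H t * (H' t * Real.log t + H t / t)) t ∧
      0 < t ^ H t * (H' t * Real.log t + H t / t)) := by
  have key : ∀ t ∈ Set.Icc T₁ T₂, 1 ≤ t →
      HasDerivAt (fun s : ℝ => s ^ H s)
        (t ^ H t * (H' t * Real.log t + H t / t)) t ∧
      0 < t ^ H t * (H' t * Real.log t + H t / t) := by
    intro t ht h1t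
    have ht0 : 0 < t := lt_of_lt_of_le one_pos h1t
    have hd1 : HasDerivAt (fun s => H s * Real.log s)
        (H' t * Real.log t + H t * t⁻¹) t :=
      (hderiv t ht).mul (Real.hasDerivAt_log (ne_of_gt ht0))
    have hd2 : HasDerivAt (fun s => Real.exp (H s * Real.log s))
        (Real.exp (H t * Real.log t) * (H' t * Real.log t + H t * t⁻¹)) t := hd1.exp
    have heq : (fun s : ℝ => s ^ H s) =ᶠ[nhds t] fun s => Real.exp (H s * Real.log s) := by
      filter_upwards [eventually_gt_nhds ht0] with s hs
      rw [Real.rpow_def_of_pos hs, mul_comm]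
    have hval : t ^ H t = Real.exp (H t * Real.log t) := by
      rw [Real.rpow_def_of_pos ht0, mul_comm]
    have hd3 : HasDerivAt (fun s : ℝ => s ^ H s)
        (t ^ H t * (H' t * Real.log t + H t / t)) t := by
      rw [hval, div_eq_mul_inv]
      exact hd2.congr_of_eventuallyEq heq
    refine ⟨hd3, ?_⟩
    have hpos1 : 0 < t ^ H t := Real.rpow_pos_of_pos ht0 _
    have hpos2 : 0 < H' t * Real.log t + H t / t :=
      add_pos_of_nonneg_of_pos
        (mul_nonneg (hH'ge t ht) (Real.log_nonneg h1t))
        (div_pos (hHpos t ht) ht0)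
    exact mul_pos hpos1 hpos2
  have hlt1 : ∀ t ∈ Set.Icc T₁ T₂, t < 1 → t ^ H t < 1 := fun t ht ht1 =>
    Real.rpow_lt_one (le_of_lt (lt_of_lt_of_le hT₁ ht.1)) ht1 (hHpos t ht)
  refine ⟨?_, hlt1, key⟩
  intro t ht
  have ht2 : t < T₂ := ht.2
  have htIcc : t ∈ Set.Icc T₁ T₂ := ⟨ht.1, le_of_lt ht2⟩
  have hT₂mem : T₂ ∈ Set.Icc T₁ T₂ := ⟨le_of_lt hT₁₂, le_refl _⟩
  have h1le : 1 ≤ T₂ ^ H T₂ := by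
    have := Real.rpow_le_rpow_of_exponent_le hT₂ (le_of_lt (hHpos T₂ hT₂mem))
    rwa [Real.rpow_zero] at this
  rcases lt_or_ge t 1 with h | h
  · exact lt_of_lt_of_le (hlt1 t htIcc h) h1le
  · have mono : StrictMonoOn (fun s : ℝ => s ^ H s) (Set.Icc t T₂) := by
      apply strictMonoOn_of_deriv_pos (convex_Icc _ _)
      · intro s hs
        exact ((key s ⟨le_trans ht.1 hs.1, hs.2⟩
          (le_trans h hs.1)).1).continuousAt.continuousWithinAt
      · intro s hs
        rw [interior_Icc] at hs
        have hk := key s ⟨le_trans ht.1 (le_of_lt hs.1), le_of_lt hs.2⟩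
          (le_trans h (le_of_lt hs.1))
        rw [hk.1.deriv]
        exact hk.2
    exact mono ⟨le_refl t, le_of_lt ht2⟩ ⟨le_of_lt ht2, le_refl _⟩ ht2
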